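/- For every complex number x, every odd positive integer m, and every natural number n, the sum over k from 0 to n of x^k * (F_m * L_{mk} + (x * L_m - 2) * F_{m(k+1)}) equals x^(n+1) * L_m * F_{m(n+1)}, where F and L are the Fibonacci and Lucas numbers. -/
import Mathlib


open Finset

noncomputable def fibC : ℕ → ℂ
  | 0 => 0
  | 1 => 1
  | n + 2 => fibC (n + 1) + fibC n

noncomputable def lucasC : ℕ → ℂ
  | 0 => 2
  | 1 => 1
  | n + 2 => lucasC (n + 1) + lucasC n

lemma fibC_eq : ∀ n, fibC n = (Nat.fib n : ℂ)
  | 0 => by simp [fibC]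
  | 1 => by simp [fibC]
  | n + 2 => by
      rw [fibC, fibC_eq (n + 1), fibC_eq n, Nat.fib_add_two]
      push_cast; ring

lemma lucasC_eq : ∀ n, lucasC n = 2 * fibC (n + 1) - fibC n
  | 0 => by simp [fibC, lucasC]
  | 1 => by simp [fibC, lucasC]; norm_num
  | n + 2 => by
      have h1 : fibC (n + 3) = fibC (n + 2) + fibC (n + 1) := by
        rw [show n + 3 = (n + 1) + 2 from rfl, fibC]
      have h2 : fibC (n + 2) = fibC (n + 1) + fibC n := by rw [fibC]
      rw [lucasC, lucasC_eq (n + 1), lucasC_eq n,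
        show n + 2 + 1 = n + 3 from rfl, h1, h2]
      ring

lemma keyId (a b : ℕ) :
    fibC a * lucasC b + lucasC a * fibC b = 2 * fibC (a + b) := by
  cases a with
  | zero => simp [fibC, lucasC]
  | succ a =>
    simp only [lucasC_eq, fibC_eq]
    have h : (Nat.fib (a + b + 1) : ℂ)
        = Nat.fib a * Nat.fib b + Nat.fib (a + 1) * Nat.fib (b + 1) := by
      exact_mod_cast congrArg (Nat.cast : ℕ → ℂ) (Nat.fib_add a b)
    have h2 : (Nat.fib (a + 1 + 1) : ℂ) = Nat.fib a + Nat.fib (a + 1) := by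
      exact_mod_cast congrArg (Nat.cast : ℕ → ℂ) Nat.fib_add_two
    rw [show a + 1 + b = a + b + 1 by ring, h, h2]
    ring

theorem stmt15 (x : ℂ) (m : ℕ) (hm : Odd m) (hm' : 0 < m) (n : ℕ) :
    ∑ k ∈ Finset.range (n + 1),
        x ^ k * (fibC m * lucasC (m * k) + (x * lucasC m - 2) * fibC (m * (k + 1))) =
      x ^ (n + 1) * lucasC m * fibC (m * (n + 1)) := by
  induction n with
  | zero => simp [lucasC]; ring
  | succ n ih =>
    rw [Finset.sum_range_succ, ih]
    have hk := keyId m (m * (n + 1))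
    rw [show m + m * (n + 1) = m * (n + 1 + 1) by ring] at hk
    linear_combination x ^ (n + 1) * hk
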